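/- arXiv:1903.11163 — 2 statements merged into one kernel-verified Lean document; each statement's English description precedes it below -/
import Mathlib

section
/- Let n ∈ ℕ, μ ∈ ℝⁿ, L an n×n real matrix, and let γ be the pushforward of the n-fold product of the standard real Gaussian measure (gaussianReal 0 1) under the affine map z ↦ μ + L·z, so that γ is a Gaussian measure with mean μ and covariance Σ = L Lᵀ. Then for every constant c ∈ ℝ, vector j ∈ ℝⁿ, and symmetric n×n matrix H, the expectation of the quadratic function x ↦ c + ⟨j, x − μ⟩ + (1/2)(x − μ)ᵀ H (x − μ) with respect to γ equals c + (1/2)·tr(H Σ). -/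
open MeasureTheory ProbabilityTheory Matrix

/-! Pulling back along `z ↦ μ + L z`, the integrand becomes `c + (jᵀL) z + ½ zᵀ (LᵀHL) z` under
the product of standard Gaussians. Its coordinates are independent, centred and of unit variance,
so the linear term integrates to `0` and the quadratic one to `½ tr (LᵀHL) = ½ tr (H L Lᵀ)`. -/

section Quadratic

variable {ι : Type*} [Fintype ι] {P : Measure (ι → ℝ)}

lemma integral_dotProduct (hP : ∀ i, Integrable (fun z : ι → ℝ => z i) P) (a : ι → ℝ) :
    ∫ z, a ⬝ᵥ z ∂P = a ⬝ᵥ fun i => ∫ z, z i ∂P := by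
  simp only [dotProduct]
  rw [integral_finsetSum _ fun i _ => (hP i).const_mul (a i)]
  simp_rw [integral_const_mul]

lemma dotProduct_mulVec_self_eq_sum (M : Matrix ι ι ℝ) (z : ι → ℝ) :
    z ⬝ᵥ M *ᵥ z = ∑ i, ∑ k, M i k * (z i * z k) := by
  simp only [dotProduct, mulVec, Finset.mul_sum]
  exact Finset.sum_congr rfl fun i _ => Finset.sum_congr rfl fun k _ => by ring

lemma integrable_dotProduct_mulVec (hP : ∀ i k, Integrable (fun z : ι → ℝ => z i * z k) P)
    (M : Matrix ι ι ℝ) : Integrable (fun z => z ⬝ᵥ M *ᵥ z) P := by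
  simp_rw [dotProduct_mulVec_self_eq_sum]
  exact integrable_finsetSum _ fun i _ => integrable_finsetSum _ fun k _ => (hP i k).const_mul _

lemma integral_dotProduct_mulVec (hP : ∀ i k, Integrable (fun z : ι → ℝ => z i * z k) P)
    (M : Matrix ι ι ℝ) :
    ∫ z, z ⬝ᵥ M *ᵥ z ∂P = ∑ i, ∑ k, M i k * ∫ z, z i * z k ∂P := by
  simp_rw [dotProduct_mulVec_self_eq_sum]
  rw [integral_finsetSum (f := fun i (z : ι → ℝ) => ∑ k, M i k * (z i * z k)) _
    fun i _ => integrable_finsetSum _ fun k _ => (hP i k).const_mul _]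
  refine Finset.sum_congr rfl fun i _ => ?_
  rw [integral_finsetSum _ fun k _ => (hP i k).const_mul _]
  simp_rw [integral_const_mul]

variable [DecidableEq ι] [IsProbabilityMeasure P]

theorem integral_quadratic_of_isotropic (hP : ∀ i, MemLp (fun z : ι → ℝ => z i) 2 P)
    (hmean : ∀ i, ∫ z, z i ∂P = 0)
    (hcov : ∀ i k, ∫ z, z i * z k ∂P = if i = k then 1 else 0)
    (c : ℝ) (a : ι → ℝ) (M : Matrix ι ι ℝ) :
    ∫ z, (c + a ⬝ᵥ z + (1 / 2) * (z ⬝ᵥ M *ᵥ z)) ∂P = c + (1 / 2) * M.trace := by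
  have h1 : ∀ i, Integrable (fun z : ι → ℝ => z i) P := fun i => (hP i).integrable one_le_two
  have h2 : ∀ i k, Integrable (fun z : ι → ℝ => z i * z k) P := fun i k =>
    (hP i).integrable_mul (hP k)
  have hlin : Integrable (fun z : ι → ℝ => a ⬝ᵥ z) P := by
    simpa only [dotProduct] using integrable_finsetSum _ fun i _ => (h1 i).const_mul (a i)
  rw [integral_add ((integrable_const c).fun_add hlin)
      ((integrable_dotProduct_mulVec h2 M).const_mul _),
    integral_add (integrable_const c) hlin, integral_const_mul, integral_dotProduct h1,
    integral_dotProduct_mulVec h2]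
  simp [hmean, hcov, trace]

end Quadratic

section ProductMeasure

variable {ι : Type*} [Fintype ι] {ν : ι → Measure ℝ} [∀ i, IsProbabilityMeasure (ν i)]

lemma memLp_eval_pi {i : ι} (h : MemLp id 2 (ν i)) :
    MemLp (fun z : ι → ℝ => z i) 2 (Measure.pi ν) :=
  h.comp_measurePreserving (measurePreserving_eval ν i)

lemma integral_eval_mul_eval_pi [DecidableEq ι] (hν : ∀ i, MemLp id 2 (ν i)) (i k : ι) :
    ∫ z, z i * z k ∂Measure.pi ν =
      if i = k then ∫ x, x ^ 2 ∂ν i else (∫ x, x ∂ν i) * ∫ x, x ∂ν k := by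
  split_ifs with hik
  · subst hik
    simp_rw [← sq]
    exact integral_comp_eval (X := fun _ => ℝ) (f := fun x : ℝ => x ^ 2) (by fun_prop)
  · have hindep :=
      (iIndepFun_pi (X := fun _ => id) fun i => aemeasurable_id (μ := ν i)).indepFun hik
    rw [← integral_eval, ← integral_eval]
    exact hindep.integral_mul_eq_mul_integral (memLp_eval_pi (hν i)).aestronglyMeasurable
      (memLp_eval_pi (hν k)).aestronglyMeasurable

end ProductMeasure

lemma integral_sq_gaussianReal_zero_one : ∫ x, x ^ 2 ∂gaussianReal 0 1 = 1 := by
  rw [← variance_of_integral_eq_zero aemeasurable_id' integral_id_gaussianReal]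
  exact variance_fun_id_gaussianReal

section Gaussian

variable {ι : Type*} [Fintype ι] [DecidableEq ι]

theorem integral_quadratic_pi_gaussianReal (c : ℝ) (a : ι → ℝ) (M : Matrix ι ι ℝ) :
    ∫ z, (c + a ⬝ᵥ z + (1 / 2) * (z ⬝ᵥ M *ᵥ z)) ∂(Measure.pi fun _ : ι => gaussianReal 0 1) =
      c + (1 / 2) * M.trace := by
  have hν : ∀ _ : ι, MemLp id 2 (gaussianReal 0 1) := fun _ =>
    memLp_id_gaussianReal' 2 ENNReal.ofNat_ne_top
  refine integral_quadratic_of_isotropic (fun i => memLp_eval_pi (hν i)) (fun i => ?_)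
    (fun i k => ?_) c a M
  · rw [integral_eval, integral_id_gaussianReal]
  · simp [integral_eval_mul_eval_pi hν, integral_sq_gaussianReal_zero_one,
      integral_id_gaussianReal]

end Gaussian

theorem gaussian_expectation_quadratic_general
    {n : ℕ} (μ : Fin n → ℝ) (L : Matrix (Fin n) (Fin n) ℝ)
    (γ : Measure (Fin n → ℝ))
    (hγ : γ = Measure.map (fun z : Fin n → ℝ => μ + L.mulVec z)
      (Measure.pi fun _ : Fin n => gaussianReal 0 1))
    (c : ℝ) (j : Fin n → ℝ)
    (H : Matrix (Fin n) (Fin n) ℝ) :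
    ∫ x, (c + j ⬝ᵥ (x - μ) + (1 / 2) * ((x - μ) ⬝ᵥ H.mulVec (x - μ))) ∂γ =
      c + (1 / 2) * (H * (L * Lᵀ)).trace := by
  have hquad : ∀ z, (L *ᵥ z) ⬝ᵥ H *ᵥ (L *ᵥ z) = z ⬝ᵥ (Lᵀ * H * L) *ᵥ z := fun z => by
    rw [← mulVec_mulVec, ← mulVec_mulVec, dotProduct_mulVec z, vecMul_transpose]
  rw [hγ, integral_map (by fun_prop) (by fun_prop)]
  simp_rw [add_sub_cancel_left, dotProduct_mulVec j L, hquad]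
  rw [integral_quadratic_pi_gaussianReal, trace_mul_cycle, trace_mul_comm]

/-- For the Gaussian measure `γ` on `ℝⁿ` with mean `μ` and covariance `Σ = L Lᵀ`
(the pushforward of the product of standard Gaussians under `z ↦ μ + L z`), the expectation
of the quadratic function `x ↦ c + ⟨j, x − μ⟩ + (1/2)(x − μ)ᵀ H (x − μ)` equals
`c + (1/2)·tr(H Σ)`. -/
theorem gaussian_expectation_quadratic
    {n : ℕ} (μ : Fin n → ℝ) (L : Matrix (Fin n) (Fin n) ℝ)
    (γ : Measure (Fin n → ℝ))
    (hγ : γ = Measure.map (fun z : Fin n → ℝ => μ + L.mulVec z)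
      (Measure.pi fun _ : Fin n => gaussianReal 0 1))
    (c : ℝ) (j : Fin n → ℝ)
    (H : Matrix (Fin n) (Fin n) ℝ) (hH : H.IsSymm) :
    ∫ x, (c + j ⬝ᵥ (x - μ) + (1 / 2) * ((x - μ) ⬝ᵥ H.mulVec (x - μ))) ∂γ =
      c + (1 / 2) * (H * (L * Lᵀ)).trace :=
  gaussian_expectation_quadratic_general μ L γ hγ c j H
end

section
/- Let n ∈ ℕ, μ ∈ ℝⁿ, L an n×n real matrix, and let γ be the pushforward of the n-fold product of the standard real Gaussian measure (gaussianReal 0 1) under the affine map z ↦ μ + L·z, with covariance Σ = L Lᵀ. For a symmetric n×n matrix M write q_M(x) = (x − μ)ᵀ M (x − μ). Then for all symmetric n×n matrices A and B, the covariance ∫ q_A(x) q_B(x) dγ(x) − (∫ q_A(x) dγ(x))·(∫ q_B(x) dγ(x)) equals 2·tr(A Σ B Σ). -/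
/-!
Write `x = μ + L z` with `z` standard Gaussian. Then `q_A(x) = zᵀ S z` and `q_B(x) = zᵀ T z` with
`S = Lᵀ A L` and `T = Lᵀ B L`. Expanding both forms in coordinates reduces everything to the
moments `E[z_i z_j] = δ_ij` and (Isserlis) `E[z_i z_j z_k z_l] = δ_ij δ_kl + δ_ik δ_jl + δ_il δ_jk`,
which follow from the independence of the coordinates and the one-dimensional moments
`0, 1, 0, 3`. Hence `E[q_A q_B] = tr S tr T + tr (S Tᵀ) + tr (S T)`; the first term is the product
of the means, and since `T` is symmetric the rest is `2 tr (S T) = 2 tr (A Σ B Σ)` by cyclicity.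
-/

open MeasureTheory ProbabilityTheory Matrix Real
open scoped Nat

lemma integrable_pow_gaussianReal (μ : ℝ) (v : NNReal) (k : ℕ) :
    Integrable (fun x : ℝ => x ^ k) (gaussianReal μ v) :=
  (integrable_norm_iff (by fun_prop)).1 <| by
    simpa using (memLp_id_gaussianReal (μ := μ) (v := v) k).integrable_norm_pow'

lemma integral_pow_odd_gaussianReal (v : NNReal) (k : ℕ) :
    ∫ x, x ^ (2 * k + 1) ∂gaussianReal 0 v = 0 := by
  have h := integral_map (μ := gaussianReal 0 v) measurable_neg.aemeasurable
    (f := fun x : ℝ => x ^ (2 * k + 1)) (by fun_prop)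
  rw [gaussianReal_map_neg, neg_zero] at h
  simp only [Odd.neg_pow (odd_two_mul_add_one k), integral_neg] at h
  linarith

lemma integral_pow_even_gaussianReal (k : ℕ) :
    ∫ x, x ^ (2 * k) ∂gaussianReal 0 1 = (2 * k - 1 : ℕ)‼ := by
  have hpdf (x : ℝ) : gaussianPDFReal 0 1 x = (√(2 * π))⁻¹ * exp (-(1 / 2) * x ^ 2) := by
    simp only [gaussianPDFReal, NNReal.coe_one, mul_one, sub_zero]
    ring_nf
  have hk : (-1 : ℝ) < (2 * k : ℕ) := by linarith [(2 * k).cast_nonneg (α := ℝ)]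
  have habs : ∫ x : ℝ, x ^ (2 * k) * exp (-(1 / 2) * x ^ 2)
      = 2 * ∫ x in Set.Ioi (0 : ℝ), x ^ ((2 * k : ℕ) : ℝ) * exp (-(1 / 2) * x ^ (2 : ℝ)) := by
    rw [← integral_comp_abs]
    congr 1 with x
    rw [rpow_natCast, rpow_two, (even_two_mul k).pow_abs, sq_abs]
  have hΓ : Gamma ((((2 * k : ℕ) : ℝ) + 1) / 2) = (2 * k - 1 : ℕ)‼ * √π / 2 ^ k := by
    rw [← Gamma_nat_add_half]
    push_cast
    ring_nf
  have hpow : (1 / 2 : ℝ) ^ (-(((2 * k : ℕ) : ℝ) + 1) / 2) = 2 ^ k * √2 := by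
    rw [one_div, inv_rpow zero_le_two, ← rpow_neg zero_le_two, sqrt_eq_rpow, ← rpow_natCast,
      ← rpow_add two_pos]
    push_cast
    ring_nf
  rw [integral_gaussianReal_eq_integral_smul one_ne_zero]
  simp_rw [smul_eq_mul, hpdf, mul_assoc, mul_comm (exp _)]
  rw [integral_const_mul, habs, integral_rpow_mul_exp_neg_mul_rpow two_pos hk (by norm_num), hΓ,
    hpow, sqrt_mul zero_le_two]
  field_simp

lemma Multiset.prod_map_eq_prod_pow_count {ι M : Type*} [Fintype ι] [DecidableEq ι]
    [CommMonoid M] (s : Multiset ι) (f : ι → M) :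
    (s.map f).prod = ∏ m, f m ^ s.count m := by
  rw [Finset.prod_multiset_map_count]
  exact Finset.prod_subset (Finset.subset_univ _) fun m _ hm => by
    rw [Multiset.count_eq_zero_of_notMem (by simpa using hm), pow_zero]

lemma integral_sum_sum {α κ κ' : Type*} [MeasurableSpace α] {μ : Measure α}
    (s : Finset κ) (t : Finset κ') {f : κ → κ' → α → ℝ} (hf : ∀ i j, Integrable (f i j) μ) :
    ∫ a, ∑ i ∈ s, ∑ j ∈ t, f i j a ∂μ = ∑ i ∈ s, ∑ j ∈ t, ∫ a, f i j a ∂μ := by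
  rw [integral_finsetSum _ fun i _ => integrable_finsetSum _ fun j _ => hf i j]
  exact Finset.sum_congr rfl fun i _ => integral_finsetSum _ fun j _ => hf i j

namespace Matrix

lemma mulVec_dotProduct_mulVec_mulVec {m n R : Type*} [Fintype m] [Fintype n] [CommSemiring R]
    (A : Matrix m m R) (L : Matrix m n R) (z : n → R) :
    (L *ᵥ z) ⬝ᵥ A *ᵥ (L *ᵥ z) = z ⬝ᵥ (Lᵀ * A * L) *ᵥ z := by
  rw [Matrix.mul_assoc, ← mulVec_mulVec, dotProduct_mulVec z, vecMul_transpose, mulVec_mulVec]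

lemma IsSymm.transpose_mul_mul {m n R : Type*} [Fintype m] [CommSemiring R] {B : Matrix m m R}
    (hB : B.IsSymm) (L : Matrix m n R) :
    (Lᵀ * B * L).IsSymm := by
  simp [IsSymm, transpose_mul, hB.eq, Matrix.mul_assoc]

end Matrix

section StandardGaussianPi

variable {ι : Type*} [Fintype ι]

local notation "𝒩" => Measure.pi fun _ : ι => gaussianReal 0 1

lemma integrable_multiset_prod_pi_gaussianReal [DecidableEq ι] (s : Multiset ι) :
    Integrable (fun z : ι → ℝ => (s.map z).prod) 𝒩 := by
  simp_rw [Multiset.prod_map_eq_prod_pow_count]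
  exact Integrable.fintype_prod fun m => integrable_pow_gaussianReal 0 1 (s.count m)

lemma integral_multiset_prod_pi_gaussianReal [DecidableEq ι] (s : Multiset ι) :
    ∫ z, (s.map z).prod ∂𝒩 = ∏ m ∈ s.toFinset, ∫ x, x ^ s.count m ∂gaussianReal 0 1 := by
  simp_rw [Multiset.prod_map_eq_prod_pow_count]
  rw [integral_fintype_prod_eq_prod (fun m x => x ^ s.count m)]
  refine (Finset.prod_subset (Finset.subset_univ _) fun m _ hm => ?_).symm
  simp [Multiset.count_eq_zero_of_notMem (by simpa using hm)]

lemma integral_mul_pi_gaussianReal [DecidableEq ι] (i j : ι) :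
    ∫ z, z i * z j ∂𝒩 = if i = j then 1 else 0 := by
  have h := integral_multiset_prod_pi_gaussianReal (ι := ι) {i, j}
  simp only [Multiset.insert_eq_cons, Multiset.map_cons, Multiset.prod_cons,
    Multiset.map_singleton, Multiset.prod_singleton] at h
  have h2 : ∫ x, x ^ 2 ∂gaussianReal 0 1 = 1 := by simpa using integral_pow_even_gaussianReal 1
  rw [h]
  by_cases hij : i = j <;> subst_vars <;> simp [Multiset.count_cons, Finset.prod_insert, *]

lemma integral_mul_mul_mul_pi_gaussianReal [DecidableEq ι] (i j k l : ι) :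
    ∫ z, z i * z j * z k * z l ∂𝒩
      = (if i = j then 1 else 0) * (if k = l then 1 else 0)
        + (if i = k then 1 else 0) * (if j = l then 1 else 0)
        + (if i = l then 1 else 0) * (if j = k then 1 else 0) := by
  have h := integral_multiset_prod_pi_gaussianReal (ι := ι) {i, j, k, l}
  simp only [Multiset.insert_eq_cons, Multiset.map_cons, Multiset.prod_cons,
    Multiset.map_singleton, Multiset.prod_singleton, ← mul_assoc] at h
  have h2 : ∫ x, x ^ 2 ∂gaussianReal 0 1 = 1 := by simpa using integral_pow_even_gaussianReal 1
  have h3 : ∫ x, x ^ 3 ∂gaussianReal 0 1 = 0 := integral_pow_odd_gaussianReal 1 1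
  have h4 : ∫ x, x ^ 4 ∂gaussianReal 0 1 = 3 := by simpa using integral_pow_even_gaussianReal 2
  rw [h]
  -- each of the 15 equality patterns of `(i, j, k, l)` is a product of the moments above
  by_cases hij : i = j <;> by_cases hik : i = k <;> by_cases hil : i = l <;>
    by_cases hjk : j = k <;> by_cases hjl : j = l <;> by_cases hkl : k = l <;> subst_vars <;>
    simp [Multiset.count_cons, Finset.prod_insert, *] <;> (try split_ifs at *) <;>
    (simp_all; try norm_num)

lemma dotProduct_mulVec_eq_sum_sum (S : Matrix ι ι ℝ) (z : ι → ℝ) :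
    z ⬝ᵥ S *ᵥ z = ∑ i, ∑ j, S i j * (z i * z j) := by
  simp only [dotProduct, mulVec, Finset.mul_sum]
  exact Finset.sum_congr rfl fun i _ => Finset.sum_congr rfl fun j _ => by ring

lemma integral_dotProduct_mulVec_pi_gaussianReal (S : Matrix ι ι ℝ) :
    ∫ z, z ⬝ᵥ S *ᵥ z ∂𝒩 = S.trace := by
  classical
  have hint (i j : ι) : Integrable (fun z : ι → ℝ => S i j * (z i * z j)) 𝒩 := by
    simpa using (integrable_multiset_prod_pi_gaussianReal {i, j}).const_mul (S i j)
  simp_rw [dotProduct_mulVec_eq_sum_sum, integral_sum_sum _ _ hint, integral_const_mul,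
    integral_mul_pi_gaussianReal]
  simp [trace]

lemma integral_dotProduct_mulVec_mul_pi_gaussianReal (S T : Matrix ι ι ℝ) :
    ∫ z, (z ⬝ᵥ S *ᵥ z) * (z ⬝ᵥ T *ᵥ z) ∂𝒩
      = S.trace * T.trace + (S * Tᵀ).trace + (S * T).trace := by
  classical
  have hint (i j k l : ι) :
      Integrable (fun z : ι → ℝ => S i j * T k l * (z i * z j * z k * z l)) 𝒩 := by
    simpa [mul_assoc] using
      (integrable_multiset_prod_pi_gaussianReal {i, j, k, l}).const_mul (S i j * T k l)
  have hexpand (z : ι → ℝ) : (z ⬝ᵥ S *ᵥ z) * (z ⬝ᵥ T *ᵥ z)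
      = ∑ i, ∑ j, ∑ k, ∑ l, S i j * T k l * (z i * z j * z k * z l) := by
    simp only [dotProduct_mulVec_eq_sum_sum, Finset.sum_mul]
    simp only [Finset.mul_sum]
    exact Fintype.sum_congr _ _ fun i => Fintype.sum_congr _ _ fun j =>
      Fintype.sum_congr _ _ fun k => Fintype.sum_congr _ _ fun l => by ring
  calc ∫ z, (z ⬝ᵥ S *ᵥ z) * (z ⬝ᵥ T *ᵥ z) ∂𝒩
      = ∑ i, ∑ j, ∑ k, ∑ l, S i j * T k l * ∫ z, z i * z j * z k * z l ∂𝒩 := by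
        simp_rw [hexpand]
        rw [integral_sum_sum _ _ fun i j =>
          integrable_finsetSum _ fun k _ => integrable_finsetSum _ fun l _ => hint i j k l]
        refine Fintype.sum_congr _ _ fun i => Fintype.sum_congr _ _ fun j => ?_
        simp_rw [integral_sum_sum _ _ (hint i j), integral_const_mul]
    _ = S.trace * T.trace + (S * Tᵀ).trace + (S * T).trace := by
        simp_rw [integral_mul_mul_mul_pi_gaussianReal]
        simp [mul_add, Finset.sum_add_distrib, trace, mul_apply, Finset.mul_sum, Finset.sum_mul]
        exact Finset.sum_comm

lemma covariance_dotProduct_mulVec_pi_gaussianReal (S T : Matrix ι ι ℝ) (hT : T.IsSymm) :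
    ∫ z, (z ⬝ᵥ S *ᵥ z) * (z ⬝ᵥ T *ᵥ z) ∂𝒩 - (∫ z, z ⬝ᵥ S *ᵥ z ∂𝒩) * (∫ z, z ⬝ᵥ T *ᵥ z ∂𝒩)
      = 2 * (S * T).trace := by
  rw [integral_dotProduct_mulVec_mul_pi_gaussianReal, integral_dotProduct_mulVec_pi_gaussianReal,
    integral_dotProduct_mulVec_pi_gaussianReal, hT.eq]
  ring

end StandardGaussianPi

theorem gaussian_covariance_quadratic_forms_general
    {n : ℕ} (μ : Fin n → ℝ) (L : Matrix (Fin n) (Fin n) ℝ)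
    (γ : Measure (Fin n → ℝ))
    (hγ : γ = Measure.map (fun z : Fin n → ℝ => μ + L.mulVec z)
      (Measure.pi fun _ : Fin n => gaussianReal 0 1))
    (A B : Matrix (Fin n) (Fin n) ℝ) (hB : B.IsSymm)
    (qA qB : (Fin n → ℝ) → ℝ)
    (hqA : qA = fun x => (x - μ) ⬝ᵥ A.mulVec (x - μ))
    (hqB : qB = fun x => (x - μ) ⬝ᵥ B.mulVec (x - μ)) :
    ∫ x, qA x * qB x ∂γ - (∫ x, qA x ∂γ) * (∫ x, qB x ∂γ) =
      2 * (A * (L * Lᵀ) * B * (L * Lᵀ)).trace := by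
  subst hγ hqA hqB
  have hmeas : Measurable fun z : Fin n → ℝ => μ + L *ᵥ z := by fun_prop
  rw [integral_map hmeas.aemeasurable, integral_map hmeas.aemeasurable,
    integral_map hmeas.aemeasurable]
  · simp_rw [add_sub_cancel_left, mulVec_dotProduct_mulVec_mulVec]
    rw [covariance_dotProduct_mulVec_pi_gaussianReal _ _ (hB.transpose_mul_mul L)]
    congr 1
    calc (Lᵀ * A * L * (Lᵀ * B * L)).trace = (Lᵀ * (A * L * Lᵀ * B * L)).trace := by
          simp only [Matrix.mul_assoc]
      _ = _ := by
          rw [trace_mul_comm]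
          simp only [Matrix.mul_assoc]
  all_goals exact Continuous.aestronglyMeasurable (by fun_prop)

/-- For the Gaussian measure `γ` on `ℝⁿ` with mean `μ` and covariance `Σ = L Lᵀ`
(the pushforward of the product of standard Gaussians under `z ↦ μ + L z`), and quadratic
forms `q_M(x) = (x − μ)ᵀ M (x − μ)`, the covariance of `q_A` and `q_B` for symmetric
matrices `A, B` equals `2·tr(A Σ B Σ)`. -/
theorem gaussian_covariance_quadratic_forms
    {n : ℕ} (μ : Fin n → ℝ) (L : Matrix (Fin n) (Fin n) ℝ)
    (γ : Measure (Fin n → ℝ))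
    (hγ : γ = Measure.map (fun z : Fin n → ℝ => μ + L.mulVec z)
      (Measure.pi fun _ : Fin n => gaussianReal 0 1))
    (A B : Matrix (Fin n) (Fin n) ℝ) (hA : A.IsSymm) (hB : B.IsSymm)
    (qA qB : (Fin n → ℝ) → ℝ)
    (hqA : qA = fun x => (x - μ) ⬝ᵥ A.mulVec (x - μ))
    (hqB : qB = fun x => (x - μ) ⬝ᵥ B.mulVec (x - μ)) :
    ∫ x, qA x * qB x ∂γ - (∫ x, qA x ∂γ) * (∫ x, qB x ∂γ) =
      2 * (A * (L * Lᵀ) * B * (L * Lᵀ)).trace :=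
  gaussian_covariance_quadratic_forms_general μ L γ hγ A B hB qA qB hqA hqB
end
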